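/- arXiv:1808.02434 — 3 statements merged into one kernel-verified Lean document; each statement's English description precedes it below -/
import Mathlib

section
/- Let H be a real Hilbert space with orthonormal basis (φₙ), let (λₙ) be positive reals with λₙ → ∞, let 1 < α < 2, and let u₀ ∈ D(A^{1/α}) (i.e., ∑ₙ |(u₀,φₙ)|² λₙ^{2/α} < ∞). Assume |E_{α,1}(-x)| ≤ C₀/(1+x) for all x ≥ 0. Then the function S₁(t)u₀ := ∑ₙ (u₀,φₙ) E_{α,1}(-λₙ t^α) φₙ satisfies ‖S₁(t)u₀‖_{D(A^{1/α})} ≤ (C₀+1)‖u₀‖_{D(A^{1/α})} for all t ≥ 0, and ‖S₁(t)u₀ - u₀‖_{D(A^σ)} → 0 as t → 0⁺ for every 0 ≤ σ < 1/α. -/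
/-!
Since `|E_{α,1}(-x)| ≤ C₀` for `x ≥ 0`, every spectral coefficient of `S₁(t)u₀` is at most
`C₀ + 1` times that of `u₀`, which gives the bound. For the initial value, `Γ(αk+1) ≥ k!` yields
`|E_{α,1}(z) - 1| ≤ e^{|z|} - 1`, so each coefficient of `S₁(t)u₀ - u₀` tends to `0`; the weights
satisfy `λ^{2σ} ≤ 1 + λ^{2/α}`, so Bessel's inequality and `u₀ ∈ D(A^{1/α})` give a summable
majorant, and dominated convergence concludes.
-/

open Filter

/-- Two-parameter Mittag-Leffler function (real variable). -/
noncomputable def ml (a b z : ℝ) : ℝ := ∑' n : ℕ, z ^ n / Real.Gamma (a * n + b)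

open Topology

lemma factorial_le_Gamma_mul_add_one {a : ℝ} (ha : 1 ≤ a) (n : ℕ) :
    (n.factorial : ℝ) ≤ Real.Gamma (a * n + 1) := by
  rcases n.eq_zero_or_pos with rfl | hn
  · simp
  have hn : (1 : ℝ) ≤ n := by exact_mod_cast hn
  have hle : (n : ℝ) ≤ a * n := le_mul_of_one_le_left (by positivity) ha
  rw [← Real.Gamma_nat_eq_factorial]
  exact Real.Gamma_strictMonoOn_Ici.monotoneOn (by simp; linarith) (by simp; linarith)
    (by linarith)

lemma abs_ml_sub_one_le {a : ℝ} (ha : 1 ≤ a) (z : ℝ) :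
    |ml a 1 z - 1| ≤ Real.exp |z| - 1 := by
  set f : ℕ → ℝ := fun n => z ^ n / Real.Gamma (a * n + 1)
  set g : ℕ → ℝ := fun n => |z| ^ n / (n.factorial : ℝ)
  have hfg : ∀ n, ‖f n‖ ≤ g n := fun n => by
    have hfac := factorial_le_Gamma_mul_add_one ha n
    have hGamma : 0 < Real.Gamma (a * n + 1) := (by positivity : (0:ℝ) < n.factorial).trans_le hfac
    rw [Real.norm_eq_abs, abs_div, abs_pow, abs_of_pos hGamma]
    exact div_le_div_of_nonneg_left (by positivity) (by positivity) hfac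
  have hg : HasSum g (Real.exp |z|) :=
    Real.exp_eq_exp_ℝ ▸ NormedSpace.expSeries_div_hasSum_exp |z|
  have hf : Summable f := .of_norm_bounded hg.summable hfg
  have htail_f : ml a 1 z - 1 = ∑' n, f (n + 1) := by
    rw [ml, hf.tsum_eq_zero_add]; simp [f]
  have htail_g : HasSum (fun n => g (n + 1)) (Real.exp |z| - 1) := by
    simpa [g] using (hasSum_nat_add_iff' 1).mpr hg
  rw [htail_f, ← Real.norm_eq_abs]
  exact tsum_of_norm_bounded htail_g fun n => hfg (n + 1)

lemma tendsto_ml_nhds_zero {a : ℝ} (ha : 1 ≤ a) : Tendsto (ml a 1) (𝓝 0) (𝓝 1) := by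
  have hexp : Tendsto (fun z : ℝ => Real.exp |z| - 1) (𝓝 0) (𝓝 0) := by
    simpa using (by fun_prop : Continuous fun z : ℝ => Real.exp |z| - 1).tendsto 0
  exact tendsto_iff_norm_sub_tendsto_zero.mpr
    (squeeze_zero (fun _ => norm_nonneg _) (abs_ml_sub_one_le ha) hexp)

lemma mul_sq_mul_le_of_abs_le {c m w M : ℝ} (hm : |m| ≤ M) (hw : 0 ≤ w) :
    (c * m) ^ 2 * w ≤ M ^ 2 * (c ^ 2 * w) := by
  have hm2 : m ^ 2 ≤ M ^ 2 := by simpa only [sq_abs] using pow_le_pow_left₀ (abs_nonneg m) hm 2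
  calc (c * m) ^ 2 * w = m ^ 2 * (c ^ 2 * w) := by ring
    _ ≤ M ^ 2 * (c ^ 2 * w) := by gcongr

section WeightedSquareSums

variable {c w : ℕ → ℝ} {M : ℝ}

lemma summable_mul_sq_mul_of_abs_le {m : ℕ → ℝ} (hw : ∀ n, 0 ≤ w n) (hm : ∀ n, |m n| ≤ M)
    (hc : Summable fun n => c n ^ 2 * w n) :
    Summable fun n => (c n * m n) ^ 2 * w n :=
  .of_nonneg_of_le (fun n => mul_nonneg (sq_nonneg _) (hw n))
    (fun n => mul_sq_mul_le_of_abs_le (hm n) (hw n)) (hc.mul_left _)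

lemma tsum_mul_sq_mul_rpow_half_le {m : ℕ → ℝ} (hw : ∀ n, 0 ≤ w n) (hm : ∀ n, |m n| ≤ M)
    (hc : Summable fun n => c n ^ 2 * w n) :
    (∑' n, (c n * m n) ^ 2 * w n) ^ ((1:ℝ)/2) ≤ M * (∑' n, c n ^ 2 * w n) ^ ((1:ℝ)/2) := by
  have hM : 0 ≤ M := (abs_nonneg _).trans (hm 0)
  have hle : ∑' n, (c n * m n) ^ 2 * w n ≤ M ^ 2 * ∑' n, c n ^ 2 * w n := by
    rw [← tsum_mul_left]
    exact (summable_mul_sq_mul_of_abs_le hw hm hc).tsum_le_tsum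
      (fun n => mul_sq_mul_le_of_abs_le (hm n) (hw n)) (hc.mul_left _)
  rw [← Real.sqrt_eq_rpow, ← Real.sqrt_eq_rpow]
  calc √(∑' n, (c n * m n) ^ 2 * w n) ≤ √(M ^ 2 * ∑' n, c n ^ 2 * w n) := Real.sqrt_le_sqrt hle
    _ = M * √(∑' n, c n ^ 2 * w n) := by rw [Real.sqrt_mul (sq_nonneg M), Real.sqrt_sq hM]

lemma tendsto_tsum_mul_sq_mul_rpow_half_zero {α : Type*} {l : Filter α} {m : α → ℕ → ℝ}
    (hw : ∀ n, 0 ≤ w n) (hc : Summable fun n => c n ^ 2 * w n)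
    (hm : ∀ n, Tendsto (m · n) l (𝓝 0)) (hM : ∀ᶠ x in l, ∀ n, |m x n| ≤ M) :
    Tendsto (fun x => (∑' n, (c n * m x n) ^ 2 * w n) ^ ((1:ℝ)/2)) l (𝓝 0) := by
  have hsum : Tendsto (fun x => ∑' n, (c n * m x n) ^ 2 * w n) l (𝓝 0) := by
    have := tendsto_tsum_of_dominated_convergence
      (f := fun x n => (c n * m x n) ^ 2 * w n) (g := fun _ => 0) (hc.mul_left (M ^ 2))
      (fun n => by simpa using (((hm n).const_mul (c n)).pow 2).mul_const (w n))
      (hM.mono fun x hx n => by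
        rw [Real.norm_of_nonneg (mul_nonneg (sq_nonneg _) (hw n))]
        exact mul_sq_mul_le_of_abs_le (hx n) (hw n))
    rwa [tsum_zero] at this
  simpa [Function.comp_def] using
    (Real.continuousAt_rpow_const 0 ((1:ℝ)/2) (Or.inr (by norm_num))).tendsto.comp hsum

end WeightedSquareSums

lemma rpow_le_one_add_rpow {x p q : ℝ} (hx : 0 ≤ x) (hp : 0 ≤ p) (hpq : p ≤ q) :
    x ^ p ≤ 1 + x ^ q := by
  rcases le_total x 1 with hx1 | hx1
  · linarith [Real.rpow_le_one hx hx1 hp, Real.rpow_nonneg hx q]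
  · linarith [Real.rpow_le_rpow_of_exponent_le hx1 hpq]

lemma summable_sq_mul_rpow_of_le {c x : ℕ → ℝ} {p q : ℝ} (hx : ∀ n, 0 ≤ x n) (hp : 0 ≤ p)
    (hpq : p ≤ q) (hc : Summable fun n => c n ^ 2) (hcq : Summable fun n => c n ^ 2 * x n ^ q) :
    Summable fun n => c n ^ 2 * x n ^ p :=
  .of_nonneg_of_le (fun n => mul_nonneg (sq_nonneg _) (Real.rpow_nonneg (hx n) p))
    (fun n => by
      have := rpow_le_one_add_rpow (hx n) hp hpq
      calc c n ^ 2 * x n ^ p ≤ c n ^ 2 * (1 + x n ^ q) := by gcongr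
        _ = c n ^ 2 + c n ^ 2 * x n ^ q := by ring)
    (hc.add hcq)

lemma Orthonormal.summable_inner_sq {H : Type*} [NormedAddCommGroup H] [InnerProductSpace ℝ H]
    {ι : Type*} {φ : ι → H} (hφ : Orthonormal ℝ φ) (u : H) :
    Summable fun i => inner ℝ u (φ i) ^ 2 :=
  (hφ.inner_products_summable (x := u)).congr fun i => by
    rw [real_inner_comm, Real.norm_eq_abs, sq_abs]

theorem S1_bound_and_initial_value_general {H : Type*} [NormedAddCommGroup H]
    [InnerProductSpace ℝ H] (φ : ℕ → H) (hφ : Orthonormal ℝ φ) (lam : ℕ → ℝ)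
    (hpos : ∀ n, 0 < lam n)
    (a C0 : ℝ) (h1 : 1 < a)
    (hE : ∀ x ≥ (0:ℝ), |ml a 1 (-x)| ≤ C0 / (1 + x)) (u0 : H)
    (hu0 : Summable fun n => (inner ℝ u0 (φ n) : ℝ) ^ 2 * lam n ^ (2 / a)) :
    (∀ t ≥ (0:ℝ),
      Summable (fun n => ((inner ℝ u0 (φ n) : ℝ) * ml a 1 (-(lam n * t ^ a))) ^ 2
          * lam n ^ (2 / a)) ∧
      (∑' n, ((inner ℝ u0 (φ n) : ℝ) * ml a 1 (-(lam n * t ^ a))) ^ 2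
          * lam n ^ (2 / a)) ^ ((1:ℝ)/2) ≤
        (C0 + 1) * (∑' n, (inner ℝ u0 (φ n) : ℝ) ^ 2 * lam n ^ (2 / a)) ^ ((1:ℝ)/2)) ∧
    ∀ σ : ℝ, 0 ≤ σ → σ < 1 / a →
      Tendsto (fun t : ℝ =>
          (∑' n, ((inner ℝ u0 (φ n) : ℝ) * (ml a 1 (-(lam n * t ^ a)) - 1)) ^ 2
            * lam n ^ (2 * σ)) ^ ((1:ℝ)/2))
        (nhdsWithin 0 (Set.Ioi 0)) (nhds 0) := by
  have hC0 : 0 ≤ C0 := by simpa using (abs_nonneg _).trans (hE 0 le_rfl)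
  have hml : ∀ n, ∀ t ≥ (0:ℝ), |ml a 1 (-(lam n * t ^ a))| ≤ C0 := fun n t ht => by
    have hx : 0 ≤ lam n * t ^ a := mul_nonneg (hpos n).le (Real.rpow_nonneg ht a)
    exact (hE _ hx).trans (div_le_self hC0 (by linarith))
  have hw : ∀ (s : ℝ) n, 0 ≤ lam n ^ s := fun s n => Real.rpow_nonneg (hpos n).le s
  refine ⟨fun t ht => ?_, fun σ hσ0 hσa => ?_⟩
  · have hM : ∀ n, |ml a 1 (-(lam n * t ^ a))| ≤ C0 + 1 := fun n => by linarith [hml n t ht]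
    exact ⟨summable_mul_sq_mul_of_abs_le (hw _) hM hu0, tsum_mul_sq_mul_rpow_half_le (hw _) hM hu0⟩
  have hσ : Summable fun n => (inner ℝ u0 (φ n) : ℝ) ^ 2 * lam n ^ (2 * σ) :=
    summable_sq_mul_rpow_of_le (fun n => (hpos n).le) (by positivity) (by
      rw [show 2 / a = 2 * (1 / a) by ring]; linarith) (hφ.summable_inner_sq u0) hu0
  have hta : Tendsto (fun t : ℝ => t ^ a) (𝓝[>] 0) (𝓝 0) := by
    simpa [Real.zero_rpow (by linarith : a ≠ 0)] using
      (Real.continuousAt_rpow_const 0 a (Or.inr (by linarith))).tendsto.mono_left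
        nhdsWithin_le_nhds
  refine tendsto_tsum_mul_sq_mul_rpow_half_zero (M := C0 + 1) (hw _) hσ (fun n => ?_) ?_
  · have harg : Tendsto (fun t : ℝ => -(lam n * t ^ a)) (𝓝[>] 0) (𝓝 0) := by
      simpa using (hta.const_mul (lam n)).neg
    simpa using ((tendsto_ml_nhds_zero h1.le).comp harg).sub_const 1
  · filter_upwards [self_mem_nhdsWithin] with t ht n
    exact (abs_sub _ _).trans (by rw [abs_one]; linarith [hml n t (le_of_lt ht)])

/-- Spectral bound for `S₁(t)u₀ = ∑ₙ (u₀,φₙ) E_{α,1}(-λₙ t^α) φₙ` in the `D(A^{1/α})`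
norm, and convergence `S₁(t)u₀ → u₀` in `D(A^σ)` as `t → 0⁺`, for `0 ≤ σ < 1/α`. -/
theorem S1_bound_and_initial_value {H : Type*} [NormedAddCommGroup H]
    [InnerProductSpace ℝ H] (φ : ℕ → H) (hφ : Orthonormal ℝ φ) (lam : ℕ → ℝ)
    (hpos : ∀ n, 0 < lam n) (htend : Tendsto lam atTop atTop)
    (a C0 : ℝ) (h1 : 1 < a) (h2 : a < 2) (hC0 : 0 < C0)
    (hE : ∀ x ≥ (0:ℝ), |ml a 1 (-x)| ≤ C0 / (1 + x)) (u0 : H)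
    (hu0 : Summable fun n => (inner ℝ u0 (φ n) : ℝ) ^ 2 * lam n ^ (2 / a)) :
    (∀ t ≥ (0:ℝ),
      Summable (fun n => ((inner ℝ u0 (φ n) : ℝ) * ml a 1 (-(lam n * t ^ a))) ^ 2
          * lam n ^ (2 / a)) ∧
      (∑' n, ((inner ℝ u0 (φ n) : ℝ) * ml a 1 (-(lam n * t ^ a))) ^ 2
          * lam n ^ (2 / a)) ^ ((1:ℝ)/2) ≤
        (C0 + 1) * (∑' n, (inner ℝ u0 (φ n) : ℝ) ^ 2 * lam n ^ (2 / a)) ^ ((1:ℝ)/2)) ∧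
    ∀ σ : ℝ, 0 ≤ σ → σ < 1 / a →
      Tendsto (fun t : ℝ =>
          (∑' n, ((inner ℝ u0 (φ n) : ℝ) * (ml a 1 (-(lam n * t ^ a)) - 1)) ^ 2
            * lam n ^ (2 * σ)) ^ ((1:ℝ)/2))
        (nhdsWithin 0 (Set.Ioi 0)) (nhds 0) :=
  S1_bound_and_initial_value_general φ hφ lam hpos a C0 h1 hE u0 hu0
end

section
/- Let H be a real Hilbert space with orthonormal basis (φₙ), (λₙ) positive reals tending to ∞, 1 < α < 2, γ = 1/α, and u₁ ∈ H. Assume |E_{α,2}(-x)| ≤ C₀/(1+x) for all x ≥ 0. Then S₂(t)u₁ := ∑ₙ (u₁,φₙ) t E_{α,2}(-λₙ t^α) φₙ lies in D(A^γ) for every t > 0 and there is a constant C > 0 (depending only on α and C₀) such that ‖S₂(t)u₁‖_{D(A^γ)} ≤ C ‖u₁‖_H for all t > 0. -/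
/-
Writing `x = λ t^α`, one has `λ^(1/α) t = x^(1/α) ≤ 1 + x` because `1/α ≤ 1`, so the decay
`|E_{α,2}(-x)| ≤ C₀/(1+x)` gives `|λ^(1/α) t E_{α,2}(-λ t^α)| ≤ C₀` uniformly in `λ, t`.
Each spectral coefficient of `S₂(t)u₁` in `D(A^γ)` is thus at most `C₀ |(u₁,φₙ)|`, and Bessel's
inequality bounds the `D(A^γ)`-norm by `C₀ ‖u₁‖`.
-/

open Filter

lemma rpow_le_one_add {x p : ℝ} (hx : 0 ≤ x) (hp0 : 0 ≤ p) (hp1 : p ≤ 1) : x ^ p ≤ 1 + x := by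
  have bernoulli := rpow_one_add_le_one_add_mul_self (s := x - 1) (by linarith) hp0 hp1
  rw [add_sub_cancel] at bernoulli
  nlinarith

lemma abs_rpow_one_div_mul_mul_le {f : ℝ → ℝ} {a C : ℝ} (ha : 1 ≤ a)
    (hf : ∀ x ≥ (0:ℝ), |f x| ≤ C / (1 + x)) {lam t : ℝ} (hlam : 0 ≤ lam) (ht : 0 ≤ t) :
    |lam ^ (1 / a) * t * f (lam * t ^ a)| ≤ C := by
  set x := lam * t ^ a
  have hx : 0 ≤ x := mul_nonneg hlam (Real.rpow_nonneg ht a)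
  have hscale : lam ^ (1 / a) * t = x ^ (1 / a) := by
    rw [Real.mul_rpow hlam (Real.rpow_nonneg ht a), ← Real.rpow_mul ht,
      mul_one_div_cancel (by linarith), Real.rpow_one]
  rw [abs_mul, hscale, abs_of_nonneg (Real.rpow_nonneg hx _)]
  calc x ^ (1 / a) * |f x| ≤ (1 + x) * (C / (1 + x)) :=
        mul_le_mul (rpow_le_one_add hx (by positivity) ((div_le_one (by linarith)).2 ha))
          (hf x hx) (abs_nonneg _) (by linarith)
    _ = C := by field_simp

section Bessel

variable {ι H : Type*} [NormedAddCommGroup H] [InnerProductSpace ℝ H] {v : ι → H}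
  {g : ι → ℝ} {M : ℝ}

lemma sq_inner_mul_le_of_abs_le (x : H) (hg : ∀ i, |g i| ≤ M) (i : ι) :
    (inner ℝ x (v i) * g i) ^ 2 ≤ M ^ 2 * ‖inner ℝ (v i) x‖ ^ 2 := by
  rw [Real.norm_eq_abs, sq_abs, real_inner_comm, mul_pow, mul_comm (M ^ 2), ← sq_abs (g i)]
  exact mul_le_mul_of_nonneg_left (pow_le_pow_left₀ (abs_nonneg _) (hg i) 2) (sq_nonneg _)

lemma Orthonormal.summable_sq_inner_mul (hv : Orthonormal ℝ v) (x : H) (hg : ∀ i, |g i| ≤ M) :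
    Summable fun i => (inner ℝ x (v i) * g i) ^ 2 :=
  Summable.of_nonneg_of_le (fun _ => sq_nonneg _) (sq_inner_mul_le_of_abs_le x hg)
    ((hv.inner_products_summable x).mul_left _)

lemma Orthonormal.tsum_sq_inner_mul_le (hv : Orthonormal ℝ v) (x : H) (hg : ∀ i, |g i| ≤ M) :
    ∑' i, (inner ℝ x (v i) * g i) ^ 2 ≤ M ^ 2 * ‖x‖ ^ 2 :=
  calc ∑' i, (inner ℝ x (v i) * g i) ^ 2 ≤ ∑' i, M ^ 2 * ‖inner ℝ (v i) x‖ ^ 2 :=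
        Summable.tsum_le_tsum (sq_inner_mul_le_of_abs_le x hg) (hv.summable_sq_inner_mul x hg)
          ((hv.inner_products_summable x).mul_left _)
    _ = M ^ 2 * ∑' i, ‖inner ℝ (v i) x‖ ^ 2 := tsum_mul_left
    _ ≤ M ^ 2 * ‖x‖ ^ 2 := mul_le_mul_of_nonneg_left (hv.tsum_inner_products_le x) (sq_nonneg _)

end Bessel

theorem S2_bound_general {H : Type*} [NormedAddCommGroup H] [InnerProductSpace ℝ H]
    (φ : ℕ → H) (hφ : Orthonormal ℝ φ) (lam : ℕ → ℝ)
    (hpos : ∀ n, 0 < lam n)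
    (a C0 : ℝ) (h1 : 1 < a) (hC0 : 0 < C0)
    (hE : ∀ x ≥ (0:ℝ), |ml a 2 (-x)| ≤ C0 / (1 + x)) (u1 : H) :
    ∃ C > 0, ∀ t > (0:ℝ),
      Summable (fun n => ((inner ℝ u1 (φ n) : ℝ) * t * ml a 2 (-(lam n * t ^ a))) ^ 2
          * lam n ^ (2 / a)) ∧
      (∑' n, ((inner ℝ u1 (φ n) : ℝ) * t * ml a 2 (-(lam n * t ^ a))) ^ 2
          * lam n ^ (2 / a)) ^ ((1:ℝ)/2) ≤ C * ‖u1‖ := by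
  refine ⟨C0, hC0, fun t ht => ?_⟩
  set g : ℕ → ℝ := fun n => lam n ^ (1 / a) * t * ml a 2 (-(lam n * t ^ a))
  have hg : ∀ n, |g n| ≤ C0 := fun n =>
    abs_rpow_one_div_mul_mul_le (f := fun x => ml a 2 (-x)) h1.le hE (hpos n).le ht.le
  have hterm : (fun n => ((inner ℝ u1 (φ n) : ℝ) * t * ml a 2 (-(lam n * t ^ a))) ^ 2
      * lam n ^ (2 / a)) = fun n => (inner ℝ u1 (φ n) * g n) ^ 2 := by
    funext n
    rw [show 2 / a = 1 / a + 1 / a by ring, Real.rpow_add (hpos n)]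
    ring
  rw [hterm, ← Real.sqrt_eq_rpow, Real.sqrt_le_left (by positivity)]
  exact ⟨hφ.summable_sq_inner_mul u1 hg, (hφ.tsum_sq_inner_mul_le u1 hg).trans_eq (by ring)⟩

/-- `S₂(t)u₁ = ∑ₙ (u₁,φₙ) t E_{α,2}(-λₙ t^α) φₙ` lies in `D(A^γ)` (γ = 1/α) for every
`t > 0`, with `‖S₂(t)u₁‖_{D(A^γ)} ≤ C ‖u₁‖` for a constant depending only on α, C₀. -/
theorem S2_bound {H : Type*} [NormedAddCommGroup H] [InnerProductSpace ℝ H]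
    (φ : ℕ → H) (hφ : Orthonormal ℝ φ) (lam : ℕ → ℝ)
    (hpos : ∀ n, 0 < lam n) (htend : Tendsto lam atTop atTop)
    (a C0 : ℝ) (h1 : 1 < a) (h2 : a < 2) (hC0 : 0 < C0)
    (hE : ∀ x ≥ (0:ℝ), |ml a 2 (-x)| ≤ C0 / (1 + x)) (u1 : H) :
    ∃ C > 0, ∀ t > (0:ℝ),
      Summable (fun n => ((inner ℝ u1 (φ n) : ℝ) * t * ml a 2 (-(lam n * t ^ a))) ^ 2
          * lam n ^ (2 / a)) ∧
      (∑' n, ((inner ℝ u1 (φ n) : ℝ) * t * ml a 2 (-(lam n * t ^ a))) ^ 2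
          * lam n ^ (2 / a)) ^ ((1:ℝ)/2) ≤ C * ‖u1‖ :=
  S2_bound_general φ hφ lam hpos a C0 h1 hC0 hE u1
end

section
/- Let 1 < α < 2, λ ≥ λ₁ > 0, and assume |E_{α,α-1}(-x)| ≤ C₀/(1+x) for all x ≥ 0 (with E the two-parameter Mittag-Leffler function). Fix T > 0 and τ ∈ [0,T). Then for all s > 0, |λ^{1/α} s^{α-2} E_{α,α-1}(-λ s^α)| ≤ C₀ s^{-2} λ^{1/α-1} ≤ C₀ s^{-2} λ₁^{1/α-1}, and hence for all t > T, |λ^{1/α}[(t-τ)^{α-1}E_{α,α}(-λ(t-τ)^α) - (T-τ)^{α-1}E_{α,α}(-λ(T-τ)^α)]| ≤ C₀ λ₁^{1/α-1} (1/(T-τ) - 1/(t-τ)). -/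
/-- With `γ = 1/α`, `λ ≥ λ₁ > 0`: `|λ^γ s^{α-2} E_{α,α-1}(-λ s^α)| ≤ C₀ s^{-2} λ^{γ-1}
≤ C₀ s^{-2} λ₁^{γ-1}`, and (using the derivative identity for `s^{α-1}E_{α,α}(-λ s^α)`)
for `0 ≤ τ < T < t`,
`|λ^γ[(t-τ)^{α-1}E_{α,α}(-λ(t-τ)^α) - (T-τ)^{α-1}E_{α,α}(-λ(T-τ)^α)]|
  ≤ C₀ λ₁^{γ-1}(1/(T-τ) - 1/(t-τ))`. -/
theorem mittagLeffler_difference_estimate (a lam lam1 C0 : ℝ) (h1 : 1 < a) (h2 : a < 2)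
    (hl1 : 0 < lam1) (hl : lam1 ≤ lam) (hC0 : 0 < C0)
    (hE : ∀ x ≥ (0:ℝ), |ml a (a - 1) (-x)| ≤ C0 / (1 + x))
    (hderiv : ∀ s > (0:ℝ),
      HasDerivAt (fun s : ℝ => s ^ (a - 1) * ml a a (-(lam * s ^ a)))
        (s ^ (a - 2) * ml a (a - 1) (-(lam * s ^ a))) s) :
    (∀ s > (0:ℝ),
      |lam ^ (1/a) * (s ^ (a - 2) * ml a (a - 1) (-(lam * s ^ a)))| ≤
        C0 * s ^ (-2 : ℝ) * lam ^ (1/a - 1) ∧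
      C0 * s ^ (-2 : ℝ) * lam ^ (1/a - 1) ≤ C0 * s ^ (-2 : ℝ) * lam1 ^ (1/a - 1)) ∧
    ∀ T t τ : ℝ, 0 ≤ τ → τ < T → T < t →
      |lam ^ (1/a) * ((t - τ) ^ (a - 1) * ml a a (-(lam * (t - τ) ^ a)) -
          (T - τ) ^ (a - 1) * ml a a (-(lam * (T - τ) ^ a)))| ≤
        C0 * lam1 ^ (1/a - 1) * (1 / (T - τ) - 1 / (t - τ)) := by
  have hlam : 0 < lam := hl1.trans_le hl
  -- pointwise bound
  have key : ∀ s > (0:ℝ), |s ^ (a - 2) * ml a (a - 1) (-(lam * s ^ a))| ≤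
      (C0 / lam) * s ^ (-2 : ℝ) := by
    intro s hs
    have hsa : (0:ℝ) < s ^ a := Real.rpow_pos_of_pos hs a
    have hx : (0:ℝ) ≤ lam * s ^ a := by positivity
    have hml : |ml a (a - 1) (-(lam * s ^ a))| ≤ C0 / (lam * s ^ a) := by
      refine (hE _ hx).trans ?_
      apply div_le_div_of_nonneg_left hC0.le (by positivity)
      linarith
    have hrw : s ^ (-2 : ℝ) = s ^ (a - 2) / s ^ a := by
      rw [← Real.rpow_sub hs]; norm_num
    calc |s ^ (a - 2) * ml a (a - 1) (-(lam * s ^ a))|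
        = s ^ (a - 2) * |ml a (a - 1) (-(lam * s ^ a))| := by
          rw [abs_mul, abs_of_nonneg (Real.rpow_nonneg hs.le _)]
      _ ≤ s ^ (a - 2) * (C0 / (lam * s ^ a)) := by
          exact mul_le_mul_of_nonneg_left hml (Real.rpow_nonneg hs.le _)
      _ = (C0 / lam) * s ^ (-2 : ℝ) := by
          rw [hrw]; field_simp
  have hexp : 1/a - 1 ≤ 0 := by
    have : 1/a < 1 := by
      rw [div_lt_one (by linarith)]; linarith
    linarith
  have hlampow : lam ^ (1/a) * (C0 / lam) = C0 * lam ^ (1/a - 1) := by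
    rw [Real.rpow_sub hlam, Real.rpow_one]
    field_simp
  have hlam1le : lam ^ (1/a - 1) ≤ lam1 ^ (1/a - 1) :=
    Real.rpow_le_rpow_of_nonpos hl1 hl hexp
  constructor
  · intro s hs
    constructor
    · have h0 : (0:ℝ) ≤ lam ^ (1/a) := (Real.rpow_pos_of_pos hlam _).le
      calc |lam ^ (1/a) * (s ^ (a - 2) * ml a (a - 1) (-(lam * s ^ a)))|
          = lam ^ (1/a) * |s ^ (a - 2) * ml a (a - 1) (-(lam * s ^ a))| := by
            rw [abs_mul, abs_of_nonneg h0]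
        _ ≤ lam ^ (1/a) * ((C0 / lam) * s ^ (-2 : ℝ)) :=
            mul_le_mul_of_nonneg_left (key s hs) h0
        _ = C0 * s ^ (-2 : ℝ) * lam ^ (1/a - 1) := by rw [← mul_assoc, hlampow]; ring
    · have hsn : (0:ℝ) ≤ C0 * s ^ (-2 : ℝ) := by positivity
      exact mul_le_mul_of_nonneg_left hlam1le hsn
  · intro T t τ hτ hτT hTt
    set A := T - τ with hAdef
    set B := t - τ with hBdef
    have hA : 0 < A := by simp [hAdef]; linarith
    have hAB : A < B := by simp [hAdef, hBdef]; linarith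
    set F : ℝ → ℝ := fun s => s ^ (a - 1) * ml a a (-(lam * s ^ a)) with hF
    set f : ℝ → ℝ := fun s => s ^ (a - 2) * ml a (a - 1) (-(lam * s ^ a)) with hf
    have hmem : ∀ s ∈ Set.uIcc A B, (0:ℝ) < s := by
      intro s hs
      rw [Set.uIcc_of_le hAB.le] at hs
      exact hA.trans_le hs.1
    have hmemI : ∀ s ∈ Set.uIoc A B, (0:ℝ) < s := by
      intro s hs
      rw [Set.uIoc_of_le hAB.le] at hs
      exact hA.trans hs.1
    -- measurability of f on the interval
    have hmeas : MeasureTheory.AEStronglyMeasurable f (MeasureTheory.volume.restrict (Set.uIoc A B)) := by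
      refine (measurable_deriv F).aestronglyMeasurable.congr ?_
      refine (MeasureTheory.ae_restrict_iff' measurableSet_uIoc).mpr ?_
      filter_upwards with s hs
      exact (hderiv s (hmemI s hs)).deriv
    -- integrability of the bound
    have hg : IntervalIntegrable (fun s => (C0 / lam) * s ^ (-2 : ℝ))
        MeasureTheory.volume A B := by
      apply ContinuousOn.intervalIntegrable
      apply continuousOn_const.mul
      intro s hs
      exact (Real.continuousAt_rpow_const s _ (Or.inl (hmem s hs).ne')).continuousWithinAt
    have hfle : ∀ᵐ s ∂MeasureTheory.volume.restrict (Set.uIoc A B),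
        ‖f s‖ ≤ (C0 / lam) * s ^ (-2 : ℝ) := by
      refine (MeasureTheory.ae_restrict_iff' measurableSet_uIoc).mpr ?_
      filter_upwards with s hs
      exact key s (hmemI s hs)
    have hfint : IntervalIntegrable f MeasureTheory.volume A B :=
      hg.mono_fun' hmeas hfle
    have hFTC : ∫ s in A..B, f s = F B - F A :=
      intervalIntegral.integral_eq_sub_of_hasDerivAt
        (fun s hs => hderiv s (hmem s hs)) hfint
    have h0notin : (0:ℝ) ∉ Set.uIcc A B := fun h => absurd (hmem 0 h) (lt_irrefl 0)
    have hIg : ∫ s in A..B, (C0 / lam) * s ^ (-2 : ℝ) = (C0 / lam) * (1/A - 1/B) := by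
      rw [intervalIntegral.integral_const_mul,
        integral_rpow (Or.inr ⟨by norm_num, h0notin⟩)]
      have he : ((-2:ℝ) + 1) = -1 := by norm_num
      rw [he, Real.rpow_neg_one, Real.rpow_neg_one, one_div, one_div]
      ring
    have hbound : |F B - F A| ≤ (C0 / lam) * (1/A - 1/B) := by
      rw [← hFTC]
      have := intervalIntegral.norm_integral_le_abs_of_norm_le hfle hg
      rw [hIg] at this
      refine this.trans ?_
      have h1A : 1/B ≤ 1/A := by
        apply one_div_le_one_div_of_le hA hAB.le
      have : 0 ≤ (C0 / lam) * (1/A - 1/B) := by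
        apply mul_nonneg (by positivity); linarith
      exact le_of_eq (abs_of_nonneg this)
    have h0 : (0:ℝ) ≤ lam ^ (1/a) := (Real.rpow_pos_of_pos hlam _).le
    calc |lam ^ (1/a) * (F B - F A)|
        = lam ^ (1/a) * |F B - F A| := by rw [abs_mul, abs_of_nonneg h0]
      _ ≤ lam ^ (1/a) * ((C0 / lam) * (1/A - 1/B)) :=
          mul_le_mul_of_nonneg_left hbound h0
      _ = C0 * lam ^ (1/a - 1) * (1/A - 1/B) := by rw [← mul_assoc, hlampow]
      _ ≤ C0 * lam1 ^ (1/a - 1) * (1/A - 1/B) := by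
          have h1A : 1/B ≤ 1/A := one_div_le_one_div_of_le hA hAB.le
          apply mul_le_mul_of_nonneg_right _ (by linarith)
          exact mul_le_mul_of_nonneg_left hlam1le hC0.le
end
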